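/- arXiv:1108.3212 — 6 statements merged into one kernel-verified Lean document; each statement's English description precedes it below -/
import Mathlib

section
/- Let C ⊆ ℤ[i] be a set of cardinality n+1. Then C is an n-universal set if and only if for every prime element p of ℤ[i] and every positive integer k, the set C is almost uniformly distributed modulo p^k. -/
open Polynomial

/-- The fraction field of the Gaussian integers. -/
abbrev FF : Type := FractionRing GaussianInt

/-- The canonical embedding of `ℤ[i]` into its fraction field. -/
noncomputable def ι : GaussianInt →+* FF := algebraMap GaussianInt FF

/-- A polynomial with coefficients in the fraction field of `ℤ[i]` is integer-valued
if it takes values in (the image of) `ℤ[i]` at every Gaussian integer. -/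
def IntegerValued (f : FF[X]) : Prop :=
  ∀ z : GaussianInt, f.eval (ι z) ∈ Set.range ι

/-- A set `M ⊆ ℤ[i]` is `n`-universal if every polynomial of degree at most `n`
with coefficients in the fraction field of `ℤ[i]` taking integer values on `M`
is integer-valued. -/
def IsNUniversal (n : ℕ) (M : Set GaussianInt) : Prop :=
  ∀ f : FF[X], f.natDegree ≤ n → (∀ c ∈ M, f.eval (ι c) ∈ Set.range ι) → IntegerValued f

/-- `M(r mod α)`: the elements of `M` congruent to `r` modulo `α`. -/
def ResidueSet (M : Finset GaussianInt) (α r : GaussianInt) : Set GaussianInt :=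
  (M : Set GaussianInt) ∩ {z | α ∣ z - r}

/-- A finite set `M ⊆ ℤ[i]` is almost uniformly distributed modulo `α` if the
cardinalities of any two residue classes of `M` modulo `α` are equal or differ by one. -/
def AlmostUnifDist (M : Finset GaussianInt) (α : GaussianInt) : Prop :=
  ∀ r s : GaussianInt,
    (ResidueSet M α r).ncard = (ResidueSet M α s).ncard ∨
    (ResidueSet M α r).ncard + 1 = (ResidueSet M α s).ncard ∨
    (ResidueSet M α s).ncard + 1 = (ResidueSet M α r).ncard

/-!
By Lagrange interpolation, `C` is `n`-universal iff `∏_{d ≠ c} (c - d) ∣ ∏_{d ≠ c} (z - d)` for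
all `c ∈ C` and `z ∈ ℤ[i]`. In a UFD this is a comparison of `p`-adic valuations, and the
valuation of `∏_{d ≠ c} (z - d)` is `∑_{j ≥ 1} #{d ≠ c | d ≡ z mod p^j}`. Almost uniform
distribution makes these counts for `z` dominate those for `c` level by level. Conversely, at
the first exponent `k + 1` where almost uniformity fails, two classes modulo `p^(k+1)` inside
one class modulo `p^k` differ in size by at least two (otherwise the failure would already show
modulo `p^k`). Descending from the larger class always into a fullest subclass gives `c ∈ C`,
descending from the smaller one always into an emptiest subclass gives `z ∉ C`; the classes
met on the first path are at every level larger than those met on the second, so the valuation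
for `z` is strictly smaller than the one for `c`.
-/

open Finset

section ResidueCount

variable {R : Type*} [CommRing R]

open Classical in
noncomputable def residueCount (C : Finset R) (α r : R) : ℕ := #{x ∈ C | α ∣ r - x}

def IsAlmostUniform (C : Finset R) (α : R) : Prop :=
  ∀ r s, residueCount C α r ≤ residueCount C α s + 1

variable {C D : Finset R} {α β r s z c : R}

theorem residueCount_congr (h : α ∣ r - s) : residueCount C α r = residueCount C α s := by
  classical
  unfold residueCount
  congr 1
  refine filter_congr fun x _ => ?_
  rw [← sub_add_sub_cancel r s x]
  exact dvd_add_right h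

theorem residueCount_le_of_dvd (h : α ∣ β) : residueCount C β r ≤ residueCount C α r := by
  classical
  exact card_le_card (monotone_filter_right _ fun _ _ hx => h.trans hx)

theorem residueCount_mono (h : D ⊆ C) : residueCount D α r ≤ residueCount C α r := by
  classical
  exact card_le_card (filter_subset_filter _ h)

theorem residueCount_one : residueCount C 1 r = #C := by
  classical
  simp [residueCount]

theorem isAlmostUniform_one : IsAlmostUniform C 1 := fun r s => by
  simp only [residueCount_one, Nat.le_succ]

theorem residueCount_pos : 0 < residueCount C α r ↔ ∃ c ∈ C, α ∣ r - c := by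
  classical
  simp [residueCount, card_pos, filter_nonempty_iff]

theorem notMem_of_residueCount_eq_zero (h : residueCount C α s = 0) : s ∉ C := fun hs =>
  (residueCount_pos.2 ⟨s, hs, by simp⟩).ne' h

variable [DecidableEq R]

theorem residueCount_erase_of_not_dvd (h : ¬α ∣ z - c) :
    residueCount (C.erase c) α z = residueCount C α z := by
  classical
  unfold residueCount
  have hc : c ∉ ({x ∈ C | α ∣ z - x} : Finset R) := fun hc => h (mem_filter.1 hc).2
  rw [filter_erase, erase_eq_of_notMem hc]

theorem residueCount_erase_add_one (hc : c ∈ C) (h : α ∣ z - c) :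
    residueCount (C.erase c) α z + 1 = residueCount C α z := by
  classical
  unfold residueCount
  rw [filter_erase, card_erase_add_one (mem_filter.2 ⟨hc, h⟩)]

theorem residueCount_erase_le (hc : c ∈ C) (h : residueCount C α c ≤ residueCount C α z + 1) :
    residueCount (C.erase c) α c ≤ residueCount (C.erase c) α z := by
  have hcc := residueCount_erase_add_one (C := C) (α := α) hc (sub_self c ▸ dvd_zero α)
  by_cases hzc : α ∣ z - c
  · exact (residueCount_congr hzc).ge
  · rw [residueCount_erase_of_not_dvd hzc]
    omega

end ResidueCount

section Transversal

variable {R : Type*} [CommRing R]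

structure IsTransversal (p : R) (T : Finset R) : Prop where
  exists_dvd_sub (u : R) : ∃ t ∈ T, p ∣ u - t
  eq_of_dvd_sub {t t' : R} : t ∈ T → t' ∈ T → p ∣ t - t' → t = t'

theorem exists_isTransversal {p : R} [Finite (R ⧸ Ideal.span {p})] (hp : ¬IsUnit p) :
    ∃ T, IsTransversal p T ∧ (0 : R) ∈ T ∧ 2 ≤ #T := by
  classical
  let Q := R ⧸ Ideal.span {p}
  have : Fintype Q := Fintype.ofFinite Q
  have : Nontrivial Q :=
    Ideal.Quotient.nontrivial_iff.2 (by rwa [Ne, Ideal.span_singleton_eq_top])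
  let mk := Ideal.Quotient.mk (Ideal.span {p})
  have dvd_sub_iff {u v : R} : p ∣ u - v ↔ mk u = mk v := by
    rw [Ideal.Quotient.eq, Ideal.mem_span_singleton]
  -- shifting the representatives by that of `0` puts `0` itself among them
  let rep : Q → R := fun x => x.out - (0 : Q).out
  have mk_rep (x : Q) : mk (rep x) = x := by simp [mk, rep]
  have rep_inj : Function.Injective rep := fun x y h => by rw [← mk_rep x, ← mk_rep y, h]
  refine ⟨univ.image rep,
    ⟨fun u => ⟨rep (mk u), mem_image_of_mem _ (mem_univ _), ?_⟩, ?_⟩, ?_, ?_⟩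
  · rw [dvd_sub_iff, mk_rep]
  · simp only [mem_image, mem_univ, true_and]
    rintro _ _ ⟨x, rfl⟩ ⟨y, rfl⟩ h
    rw [dvd_sub_iff, mk_rep, mk_rep] at h
    rw [h]
  · exact mem_image.2 ⟨0, mem_univ _, sub_self _⟩
  · rw [card_image_of_injective _ rep_inj, card_univ, ← Nat.card_eq_fintype_card]
    exact Finite.one_lt_card

variable [IsDomain R] {p : R} {T C : Finset R}

theorem residueCount_eq_sum (hp : p ≠ 0) (hT : IsTransversal p T) (m : ℕ) (r : R) :
    residueCount C (p ^ m) r = ∑ t ∈ T, residueCount C (p ^ (m + 1)) (r + p ^ m * t) := by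
  classical
  unfold residueCount
  rw [← card_biUnion]
  · congr 1
    ext x
    simp only [mem_biUnion, mem_filter]
    constructor
    · rintro ⟨hx, u, hu⟩
      obtain ⟨t, ht, v, hv⟩ := hT.exists_dvd_sub (-u)
      refine ⟨t, ht, hx, -v, ?_⟩
      rw [add_sub_right_comm, hu, ← mul_add, pow_succ, mul_assoc, mul_neg, ← hv]
      ring
    · rintro ⟨t, -, hx, h⟩
      refine ⟨hx, ?_⟩
      rw [show r - x = (r + p ^ m * t - x) - p ^ m * t by ring]
      exact dvd_sub ((pow_dvd_pow p m.le_succ).trans h) (dvd_mul_right _ _)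
  · intro t ht t' ht' hne
    simp only [Function.onFun, disjoint_left, mem_filter]
    rintro x ⟨-, h⟩ ⟨-, h'⟩
    refine hne (hT.eq_of_dvd_sub ht ht' ?_)
    have : p ^ m * p ∣ p ^ m * (t - t') := by
      rw [← pow_succ, show p ^ m * (t - t') = (r + p ^ m * t - x) - (r + p ^ m * t' - x) by ring]
      exact dvd_sub h h'
    exact (mul_dvd_mul_iff_left (pow_ne_zero m hp)).1 this

theorem exists_residueCount_succ_le (hp : p ≠ 0) (hT : IsTransversal p T) (m : ℕ) (r : R) :
    ∃ t ∈ T,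
      #T * residueCount C (p ^ (m + 1)) (r + p ^ m * t) ≤ residueCount C (p ^ m) r := by
  obtain ⟨t₀, ht₀, -⟩ := hT.exists_dvd_sub 0
  refine exists_le_of_sum_le ⟨t₀, ht₀⟩ ?_
  rw [← mul_sum, ← residueCount_eq_sum hp hT, sum_const, smul_eq_mul]

theorem exists_le_residueCount_succ (hp : p ≠ 0) (hT : IsTransversal p T) (m : ℕ) (r : R) :
    ∃ t ∈ T,
      residueCount C (p ^ m) r ≤ #T * residueCount C (p ^ (m + 1)) (r + p ^ m * t) := by
  obtain ⟨t₀, ht₀, -⟩ := hT.exists_dvd_sub 0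
  refine exists_le_of_sum_le ⟨t₀, ht₀⟩ ?_
  rw [← mul_sum, ← residueCount_eq_sum hp hT, sum_const, smul_eq_mul]

theorem IsAlmostUniform.pow_succ (hp : p ≠ 0) (hT : IsTransversal p T) (hT₀ : 0 ∈ T) {k : ℕ}
    (hk : IsAlmostUniform C (p ^ k))
    (hclass : ∀ r s, p ^ k ∣ r - s →
      residueCount C (p ^ (k + 1)) r ≤ residueCount C (p ^ (k + 1)) s + 1) :
    IsAlmostUniform C (p ^ (k + 1)) := by
  intro r s
  by_contra! hgap
  have hr : ∑ _t ∈ T, residueCount C (p ^ (k + 1)) r <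
      ∑ t ∈ T, (residueCount C (p ^ (k + 1)) (r + p ^ k * t) + 1) :=
    sum_lt_sum (fun t _ => hclass _ _ (by simp)) ⟨0, hT₀, by simp⟩
  have hs : ∑ t ∈ T, residueCount C (p ^ (k + 1)) (s + p ^ k * t) <
      ∑ _t ∈ T, (residueCount C (p ^ (k + 1)) s + 1) :=
    sum_lt_sum (fun t _ => hclass _ _ (by simp)) ⟨0, hT₀, by simp⟩
  rw [sum_add_distrib, ← residueCount_eq_sum hp hT] at hr
  rw [← residueCount_eq_sum hp hT] at hs
  simp only [sum_const, smul_eq_mul, mul_one] at hr hs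
  have := hk r s
  nlinarith

end Transversal

section Descent

variable {R : Type*} [CommRing R] [IsDomain R] [DecidableEq R] {p : R} {T C : Finset R}

theorem exists_sum_residueCount_le (hp : p ≠ 0) (hT : IsTransversal p T) (hT₂ : 2 ≤ #T)
    {m : ℕ} {r s : R} (h : residueCount C (p ^ m) s < residueCount C (p ^ m) r) :
    ∃ c ∈ C, ∃ z ∉ C, p ^ m ∣ r - c ∧ p ^ m ∣ s - z ∧ ∀ L,
      ∑ j ∈ Ioc m L, residueCount C (p ^ j) z ≤
        ∑ j ∈ Ioc m L, residueCount (C.erase c) (p ^ j) c := by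
  obtain ⟨S, hS⟩ : ∃ S, residueCount C (p ^ m) s = S := ⟨_, rfl⟩
  induction S using Nat.strong_induction_on generalizing m r s with
  | _ S ih =>
  rcases S.eq_zero_or_pos with rfl | hS₀
  · obtain ⟨c, hc, hrc⟩ := residueCount_pos.1 (hS ▸ h)
    refine ⟨c, hc, s, notMem_of_residueCount_eq_zero hS, hrc, by simp, fun L => ?_⟩
    rw [sum_eq_zero fun j hj => ?_]
    · exact Nat.zero_le _
    · exact Nat.eq_zero_of_le_zero
        (hS ▸ residueCount_le_of_dvd (pow_dvd_pow p (mem_Ioc.1 hj).1.le))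
  -- descend into the fullest subclass of `r` and the emptiest subclass of `s`
  obtain ⟨t, -, hr⟩ := exists_le_residueCount_succ (C := C) hp hT m r
  obtain ⟨t', -, hs⟩ := exists_residueCount_succ_le (C := C) hp hT m s
  set r' := r + p ^ m * t
  set s' := s + p ^ m * t'
  have hlt : residueCount C (p ^ (m + 1)) s' < residueCount C (p ^ (m + 1)) r' := by
    by_contra! hle
    have := Nat.mul_le_mul_left #T hle
    omega
  have hS' : residueCount C (p ^ (m + 1)) s' < S := by nlinarith
  obtain ⟨c, hc, z, hz, hrc, hsz, hsum⟩ := ih _ hS' hlt rfl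
  have hrc' : p ^ m ∣ r' - c := (pow_dvd_pow p m.le_succ).trans hrc
  have hsz' : p ^ m ∣ s' - z := (pow_dvd_pow p m.le_succ).trans hsz
  refine ⟨c, hc, z, hz, ?_, ?_, fun L => ?_⟩
  · rw [show r - c = r' - c - p ^ m * t by ring]
    exact dvd_sub hrc' (dvd_mul_right _ _)
  · rw [show s - z = s' - z - p ^ m * t' by ring]
    exact dvd_sub hsz' (dvd_mul_right _ _)
  rcases le_or_gt L m with hL | hL
  · simp [Ioc_eq_empty_of_le hL]
  have hm : m ≤ m + 1 := m.le_add_right 1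
  rw [← sum_Ioc_consecutive _ hm hL, ← sum_Ioc_consecutive _ hm hL, Nat.Ioc_succ_singleton,
    sum_singleton, sum_singleton]
  have hcc := residueCount_erase_add_one (C := C) (α := p ^ (m + 1)) hc (sub_self c ▸ dvd_zero _)
  have := residueCount_congr (C := C) hrc
  have := residueCount_congr (C := C) hsz
  have := hsum L
  omega

end Descent

section Valuation

open Filter

open Classical in
theorem emultiplicity_eq_card_pow_dvd {M : Type*} [Monoid M] {a b : M} {L : ℕ}
    (h : ¬a ^ L ∣ b) :
    emultiplicity a b = #{j ∈ Ioc 0 L | a ^ j ∣ b} := by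
  have hlt := emultiplicity_lt_iff_not_dvd.2 h
  have hfin : FiniteMultiplicity a b := finiteMultiplicity_iff_emultiplicity_ne_top.2 hlt.ne_top
  rw [hfin.emultiplicity_eq_multiplicity, Nat.cast_lt] at hlt
  rw [hfin.emultiplicity_eq_multiplicity, Nat.cast_inj]
  have : {j ∈ Ioc 0 L | a ^ j ∣ b} = Ioc 0 (multiplicity a b) := by
    ext j
    simp only [mem_filter, mem_Ioc, hfin.pow_dvd_iff_le_multiplicity]
    omega
  simp [this]

variable {R : Type*} [CommRing R] [IsDomain R] {p z : R} {D : Finset R}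

theorem emultiplicity_prod_sub (hp : Prime p) {L : ℕ} (hL : ∀ d ∈ D, ¬p ^ L ∣ z - d) :
    emultiplicity p (∏ d ∈ D, (z - d)) = ∑ j ∈ Ioc 0 L, residueCount D (p ^ j) z := by
  classical
  rw [emultiplicity_prod hp, sum_congr rfl fun d hd => emultiplicity_eq_card_pow_dvd (hL d hd)]
  simp only [residueCount, card_filter, Nat.cast_sum]
  rw [sum_comm]

theorem prod_sub_ne_zero (hz : z ∉ D) : ∏ d ∈ D, (z - d) ≠ 0 :=
  prod_ne_zero_iff.2 fun _ hd => sub_ne_zero.2 fun h => hz (h ▸ hd)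

theorem eventually_emultiplicity_prod_sub [WfDvdMonoid R] (hp : Prime p) (hz : z ∉ D) :
    ∀ᶠ L in atTop,
      emultiplicity p (∏ d ∈ D, (z - d)) = ∑ j ∈ Ioc 0 L, residueCount D (p ^ j) z := by
  have hfin := FiniteMultiplicity.of_not_isUnit hp.not_isUnit (prod_sub_ne_zero hz)
  filter_upwards [eventually_gt_atTop (multiplicity p (∏ d ∈ D, (z - d)))] with L hL
  exact emultiplicity_prod_sub hp fun d hd hdvd =>
    hfin.multiplicity_lt_iff_not_dvd.1 hL (hdvd.trans (dvd_prod_of_mem _ hd))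

end Valuation

section Divisibility

open Filter

variable {R : Type*} [CommRing R] [IsDomain R] [UniqueFactorizationMonoid R] [DecidableEq R]
  {p c : R} {C : Finset R}

theorem prod_erase_sub_dvd_of_isAlmostUniform
    (h : ∀ p : R, Prime p → ∀ k : ℕ, 0 < k → IsAlmostUniform C (p ^ k)) (hc : c ∈ C)
    (z : R) :
    ∏ d ∈ C.erase c, (c - d) ∣ ∏ d ∈ C.erase c, (z - d) := by
  by_cases hz : z ∈ C.erase c
  · rw [prod_eq_zero hz (sub_self z)]
    exact dvd_zero _
  refine (UniqueFactorizationMonoid.dvd_iff_emultiplicity_le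
    (prod_sub_ne_zero (notMem_erase c C))).2 fun p hp => ?_
  obtain ⟨L, hLc, hLz⟩ := ((eventually_emultiplicity_prod_sub hp (notMem_erase c C)).and
    (eventually_emultiplicity_prod_sub hp hz)).exists
  rw [hLc, hLz, Nat.cast_le]
  exact sum_le_sum fun j hj => residueCount_erase_le hc (h p hp j (mem_Ioc.1 hj).1 c z)

theorem exists_not_prod_erase_sub_dvd (hp : Prime p) {T : Finset R} (hT : IsTransversal p T)
    (hT₂ : 2 ≤ #T) {k : ℕ} {r s : R} (hrs : p ^ k ∣ r - s)
    (hgap : residueCount C (p ^ (k + 1)) s + 1 < residueCount C (p ^ (k + 1)) r) :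
    ∃ c ∈ C, ∃ z, ¬∏ d ∈ C.erase c, (c - d) ∣ ∏ d ∈ C.erase c, (z - d) := by
  obtain ⟨c, hc, z, hz, hrc, hsz, hsum⟩ :=
    exists_sum_residueCount_le (C := C) hp.ne_zero hT hT₂ (m := k + 1) (r := r) (s := s)
      (by omega)
  refine ⟨c, hc, z, fun hdvd => ?_⟩
  obtain ⟨L, hLc, hLz, hkL⟩ := ((eventually_emultiplicity_prod_sub hp (notMem_erase c C)).and
    ((eventually_emultiplicity_prod_sub hp fun h => hz (mem_of_mem_erase h)).and
      (eventually_ge_atTop (k + 1)))).exists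
  have hle := emultiplicity_le_emultiplicity_of_dvd_right (a := p) hdvd
  rw [hLc, hLz, Nat.cast_le, ← sum_Ioc_consecutive _ (Nat.zero_le _) hkL,
    ← sum_Ioc_consecutive _ (Nat.zero_le _) hkL] at hle
  have htop :
      residueCount (C.erase c) (p ^ (k + 1)) z < residueCount (C.erase c) (p ^ (k + 1)) c := by
    have := residueCount_mono (erase_subset c C) (α := p ^ (k + 1)) (r := z)
    have := residueCount_erase_add_one (C := C) (α := p ^ (k + 1)) hc (sub_self c ▸ dvd_zero _)
    have := residueCount_congr (C := C) hrc
    have := residueCount_congr (C := C) hsz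
    omega
  have hzc : p ^ k ∣ z - c := by
    rw [show z - c = (r - c) - (r - s) - (s - z) by ring]
    exact dvd_sub (dvd_sub ((pow_dvd_pow p k.le_succ).trans hrc) hrs)
      ((pow_dvd_pow p k.le_succ).trans hsz)
  have hlow : ∑ j ∈ Ioc 0 (k + 1), residueCount (C.erase c) (p ^ j) z <
      ∑ j ∈ Ioc 0 (k + 1), residueCount (C.erase c) (p ^ j) c := by
    refine sum_lt_sum (fun j hj => ?_) ⟨k + 1, by simp, htop⟩
    rcases (mem_Ioc.1 hj).2.lt_or_eq with hj | rfl
    · exact (residueCount_congr ((pow_dvd_pow p (Nat.lt_succ_iff.1 hj)).trans hzc)).le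
    · exact htop.le
  have hhigh : ∑ j ∈ Ioc (k + 1) L, residueCount (C.erase c) (p ^ j) z ≤
      ∑ j ∈ Ioc (k + 1) L, residueCount (C.erase c) (p ^ j) c :=
    (sum_le_sum fun j _ => residueCount_mono (erase_subset c C)).trans (hsum L)
  omega

theorem isAlmostUniform_of_forall_prod_erase_sub_dvd (hp : Prime p) [Finite (R ⧸ Ideal.span {p})]
    (h : ∀ c ∈ C, ∀ z, ∏ d ∈ C.erase c, (c - d) ∣ ∏ d ∈ C.erase c, (z - d))
    (k : ℕ) :
    IsAlmostUniform C (p ^ k) := by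
  obtain ⟨T, hT, hT₀, hT₂⟩ := exists_isTransversal hp.not_isUnit
  induction k with
  | zero => simpa using isAlmostUniform_one
  | succ k ih =>
    refine ih.pow_succ hp.ne_zero hT hT₀ fun r s hrs => ?_
    by_contra! hgap
    obtain ⟨c, hc, z, hcz⟩ := exists_not_prod_erase_sub_dvd hp hT hT₂ hrs hgap
    exact hcz (h c hc z)

theorem forall_prod_erase_sub_dvd_iff
    (hfin : ∀ p : R, Prime p → Finite (R ⧸ Ideal.span {p})) :
    (∀ c ∈ C, ∀ z, ∏ d ∈ C.erase c, (c - d) ∣ ∏ d ∈ C.erase c, (z - d)) ↔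
      ∀ p : R, Prime p → ∀ k : ℕ, 0 < k → IsAlmostUniform C (p ^ k) :=
  ⟨fun h p hp k _ => have := hfin p hp; isAlmostUniform_of_forall_prod_erase_sub_dvd hp h k,
    fun h _ hc z => prod_erase_sub_dvd_of_isAlmostUniform h hc z⟩

end Divisibility

section GaussianInt

noncomputable def GaussianInt.equivIntProd : GaussianInt ≃ₗ[ℤ] ℤ × ℤ where
  toFun z := (z.re, z.im)
  invFun x := ⟨x.1, x.2⟩
  map_add' _ _ := rfl
  map_smul' _ _ := by ext <;> simp
  left_inv _ := rfl
  right_inv _ := rfl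

instance : Module.Free ℤ GaussianInt := .of_equiv GaussianInt.equivIntProd.symm

instance : Module.Finite ℤ GaussianInt := .equiv GaussianInt.equivIntProd.symm

theorem GaussianInt.finite_quotient_span_singleton {p : GaussianInt} (hp : p ≠ 0) :
    Finite (GaussianInt ⧸ Ideal.span {p}) :=
  Ideal.finiteQuotientOfFreeOfNeBot _ (by simpa using hp)

theorem ι_injective : Function.Injective ι := IsFractionRing.injective GaussianInt FF

theorem ι_prod_erase_sub_mul_eval_basis (C : Finset GaussianInt) (c z : GaussianInt) :
    ι (∏ d ∈ C.erase c, (c - d)) * (Lagrange.basis C ι c).eval (ι z) =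
      ι (∏ d ∈ C.erase c, (z - d)) := by
  rw [Lagrange.basis, eval_prod, map_prod, map_prod, ← prod_mul_distrib]
  refine prod_congr rfl fun d hd => ?_
  have hne : ι c - ι d ≠ 0 := sub_ne_zero.2 (ι_injective.ne (ne_of_mem_erase hd).symm)
  rw [Lagrange.basisDivisor, eval_mul, eval_C, eval_sub, eval_X, eval_C, map_sub, map_sub]
  field_simp

theorem eval_basis_mem_range_iff (C : Finset GaussianInt) (c z : GaussianInt) :
    (Lagrange.basis C ι c).eval (ι z) ∈ Set.range ι ↔
      ∏ d ∈ C.erase c, (c - d) ∣ ∏ d ∈ C.erase c, (z - d) := by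
  have key := ι_prod_erase_sub_mul_eval_basis C c z
  have hne : ι (∏ d ∈ C.erase c, (c - d)) ≠ 0 :=
    (map_ne_zero_iff ι ι_injective).2 (prod_sub_ne_zero (notMem_erase c C))
  constructor
  · rintro ⟨w, hw⟩
    exact ⟨w, ι_injective (by rw [map_mul, hw, key])⟩
  · rintro ⟨w, hw⟩
    refine ⟨w, mul_left_cancel₀ hne ?_⟩
    rw [key, hw, map_mul]

theorem isNUniversal_iff_forall_prod_erase_sub_dvd {n : ℕ} {C : Finset GaussianInt}
    (hcard : #C = n + 1) :
    IsNUniversal n C ↔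
      ∀ c ∈ C, ∀ z, ∏ d ∈ C.erase c, (c - d) ∣ ∏ d ∈ C.erase c, (z - d) := by
  have hinj : Set.InjOn ι C := ι_injective.injOn
  constructor
  · intro hU c hc z
    refine (eval_basis_mem_range_iff C c z).1 (hU _ ?_ (fun d hd => ?_) z)
    · rw [Lagrange.natDegree_basis hinj hc, hcard, Nat.add_sub_cancel]
    · rcases eq_or_ne c d with rfl | hne
      · exact ⟨1, by rw [map_one, Lagrange.eval_basis_self hinj hc]⟩
      · exact ⟨0, by rw [map_zero, Lagrange.eval_basis_of_ne hne hd]⟩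
  · intro hdvd f hdeg hvals z
    have hlt : f.degree < #C := by
      rw [hcard]
      exact (degree_le_natDegree.trans (WithBot.coe_le_coe.2 hdeg)).trans_lt
        (WithBot.coe_lt_coe.2 n.lt_succ_self)
    rw [← RingHom.coe_range, SetLike.mem_coe, Lagrange.eq_interpolate hinj hlt,
      Lagrange.interpolate_apply, eval_finsetSum]
    refine Subring.sum_mem _ fun c hc => ?_
    rw [eval_mul, eval_C]
    exact Subring.mul_mem _ (hvals c hc) ((eval_basis_mem_range_iff C c z).2 (hdvd c hc z))

theorem ncard_residueSet (M : Finset GaussianInt) (α r : GaussianInt) :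
    (ResidueSet M α r).ncard = residueCount M α r := by
  classical
  rw [residueCount, ← Set.ncard_coe_finset]
  congr 1
  ext x
  simp [ResidueSet, dvd_sub_comm]

theorem almostUnifDist_iff_isAlmostUniform {M : Finset GaussianInt} {α : GaussianInt} :
    AlmostUnifDist M α ↔ IsAlmostUniform M α := by
  simp only [AlmostUnifDist, IsAlmostUniform, ncard_residueSet]
  exact ⟨fun h r s => by rcases h r s with h | h | h <;> omega,
    fun h r s => by have := h r s; have := h s r; omega⟩

end GaussianInt

/-- A set `C ⊆ ℤ[i]` of cardinality `n + 1` is `n`-universal if and only if it is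
almost uniformly distributed modulo `p ^ k` for every prime `p` of `ℤ[i]` and every
positive integer `k`. -/
theorem universal_iff_almostUnifDist (n : ℕ) (C : Finset GaussianInt)
    (hcard : C.card = n + 1) :
    IsNUniversal n (C : Set GaussianInt) ↔
      ∀ p : GaussianInt, Prime p → ∀ k : ℕ, 0 < k → AlmostUnifDist C (p ^ k) := by
  simp only [almostUnifDist_iff_isAlmostUniform]
  rw [isNUniversal_iff_forall_prod_erase_sub_dvd hcard]
  exact forall_prod_erase_sub_dvd_iff fun _ hp =>
    GaussianInt.finite_quotient_span_singleton hp.ne_zero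
end

section
/- Let c₀, c₁, …, cₙ be distinct Gaussian integers such that {c₀, …, cₙ} is an n-universal set, and let b₀, b₁, …, bₙ be any distinct Gaussian integers. Then the absolute value of the volume ∏_{0 ≤ i < j ≤ n} (c_i − c_j) is less than or equal to the absolute value of the volume ∏_{0 ≤ i < j ≤ n} (b_i − b_j). -/
/-!
Universality of `{c₀, …, cₙ}` makes the Lagrange basis polynomials at the nodes `cⱼ`
integer-valued. Interpolating the monomials `Xᵏ`, `k ≤ n`, at these nodes writes the Vandermonde
matrix of `b` as a Gaussian-integer matrix times the Vandermonde matrix of `c`, so the volume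
of `c` divides the volume of `b`. The latter is nonzero, and a nonzero Gaussian integer has
absolute value at least `1`.
-/

open Polynomial

/-- The volume of a family of Gaussian integers: the product of all pairwise
differences `x i - x j` over pairs `i < j`. -/
def volume {n : ℕ} (x : Fin (n + 1) → GaussianInt) : GaussianInt :=
  ∏ ij ∈ Finset.univ.filter (fun ij : Fin (n + 1) × Fin (n + 1) => ij.1 < ij.2),
    (x ij.1 - x ij.2)

section LagrangeBasis

variable {R K : Type*} [CommRing R] [Field K] [Algebra R K] {n : ℕ}

theorem Matrix.vandermonde_eq_lagrangeBasis_mul_vandermonde {v : Fin n → K}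
    (hv : Function.Injective v) (w : Fin n → K) :
    Matrix.vandermonde w =
      Matrix.of (fun i j => (Lagrange.basis Finset.univ v j).eval (w i)) *
        Matrix.vandermonde v := by
  ext i k
  have hdeg : ((X : K[X]) ^ (k : ℕ)).degree < (Finset.univ : Finset (Fin n)).card := by
    simp
  have := congrArg (eval (w i)) (Lagrange.eq_interpolate hv.injOn hdeg)
  simp only [Lagrange.interpolate_apply, eval_pow, eval_X, eval_finsetSum, eval_mul,
    eval_C] at this
  simp only [Matrix.vandermonde_apply, Matrix.mul_apply, Matrix.of_apply, this, mul_comm]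

theorem Matrix.det_vandermonde_dvd_of_lagrangeBasis_mem_range [FaithfulSMul R K]
    {v : Fin n → R} (hv : Function.Injective v) (w : Fin n → R)
    (hw : ∀ i j, (Lagrange.basis Finset.univ (algebraMap R K ∘ v) j).eval
      (algebraMap R K (w i)) ∈ Set.range (algebraMap R K)) :
    (Matrix.vandermonde v).det ∣ (Matrix.vandermonde w).det := by
  choose d hd using hw
  have hinj := FaithfulSMul.algebraMap_injective R K
  have hmap (u : Fin n → R) : Matrix.vandermonde (algebraMap R K ∘ u) =
      (algebraMap R K).mapMatrix (Matrix.vandermonde u) := by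
    ext; simp
  have hV : (algebraMap R K).mapMatrix (Matrix.vandermonde w) =
      (algebraMap R K).mapMatrix (Matrix.of d) *
        (algebraMap R K).mapMatrix (Matrix.vandermonde v) := by
    rw [← hmap, ← hmap, Matrix.vandermonde_eq_lagrangeBasis_mul_vandermonde (hinj.comp hv)]
    congr 1
    ext; simp [hd]
  refine ⟨(Matrix.of d).det, hinj ?_⟩
  rw [RingHom.map_det, hV, Matrix.det_mul, map_mul, RingHom.map_det, RingHom.map_det, mul_comm]

end LagrangeBasis

theorem IsNUniversal.integerValued_lagrangeBasis {n : ℕ} {c : Fin (n + 1) → GaussianInt}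
    (hc : Function.Injective c) (huniv : IsNUniversal n (Set.range c)) (j : Fin (n + 1)) :
    IntegerValued (Lagrange.basis Finset.univ (ι ∘ c) j) := by
  have hinj : Set.InjOn (ι ∘ c) (Finset.univ : Finset (Fin (n + 1))) :=
    ((IsFractionRing.injective GaussianInt FF).comp hc).injOn
  refine huniv _ ?_ ?_
  · simp [Lagrange.natDegree_basis hinj (Finset.mem_univ j)]
  · rintro _ ⟨i, rfl⟩
    obtain rfl | hij := eq_or_ne i j
    · exact ⟨1, by rw [map_one]; exact (Lagrange.eval_basis_self hinj (Finset.mem_univ i)).symm⟩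
    · exact ⟨0, by rw [map_zero]; exact
        (Lagrange.eval_basis_of_ne (v := ι ∘ c) hij.symm (Finset.mem_univ i)).symm⟩

theorem volume_associated_det_vandermonde {n : ℕ} (x : Fin (n + 1) → GaussianInt) :
    Associated (volume x) (Matrix.vandermonde x).det := by
  rw [volume, Matrix.det_vandermonde, Finset.prod_filter, ← Finset.univ_product_univ,
    Finset.prod_product]
  refine Associated.prod _ _ _ fun i _ => ?_
  rw [← Finset.prod_filter, Finset.filter_lt_eq_Ioi]
  exact Associated.prod _ _ _ fun j _ => by
    rw [← neg_sub]; exact (Associated.refl _).neg_left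

theorem volume_ne_zero {n : ℕ} {x : Fin (n + 1) → GaussianInt} (hx : Function.Injective x) :
    volume x ≠ 0 :=
  Finset.prod_ne_zero_iff.mpr fun _ hij =>
    sub_ne_zero.mpr (hx.ne (Finset.mem_filter.mp hij).2.ne)

theorem GaussianInt.norm_toComplex_le_of_dvd {a b : GaussianInt} (hab : a ∣ b) (hb : b ≠ 0) :
    ‖(a : ℂ)‖ ≤ ‖(b : ℂ)‖ := by
  obtain ⟨d, rfl⟩ := hab
  have hd : 1 ≤ ‖(d : ℂ)‖ := by
    have : (1 : ℝ) ≤ d.norm := by exact_mod_cast GaussianInt.norm_pos.mpr (right_ne_zero_of_mul hb)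
    rw [GaussianInt.intCast_real_norm, ← Complex.sq_norm] at this
    exact (one_le_sq_iff₀ (_root_.norm_nonneg _)).mp this
  rw [GaussianInt.toComplex_mul, norm_mul]
  exact le_mul_of_one_le_right (_root_.norm_nonneg _) hd

/-- The volume of an `n`-universal set of `n + 1` distinct Gaussian integers is minimal
in absolute value among the volumes of all families of `n + 1` distinct Gaussian integers. -/
theorem universal_volume_minimal (n : ℕ) (c b : Fin (n + 1) → GaussianInt)
    (hc : Function.Injective c) (hb : Function.Injective b)
    (huniv : IsNUniversal n (Set.range c)) :
    ‖GaussianInt.toComplex (volume c)‖ ≤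
      ‖GaussianInt.toComplex (volume b)‖ := by
  have hdvd : volume c ∣ volume b := by
    rw [(volume_associated_det_vandermonde c).dvd_iff_dvd_left,
      (volume_associated_det_vandermonde b).dvd_iff_dvd_right]
    exact Matrix.det_vandermonde_dvd_of_lagrangeBasis_mem_range (K := FF) hc b
      fun i j => huniv.integerValued_lagrangeBasis hc j (b i)
  exact GaussianInt.norm_toComplex_le_of_dvd hdvd (volume_ne_zero hb)
end

section
/- Let c₀, c₁, …, cₙ be distinct Gaussian integers such that {c₀, …, cₙ} is an n-universal set, and let b₀, b₁, …, bₙ be any distinct Gaussian integers. Then ∏_{0 ≤ i < j ≤ n} (c_i − c_j) divides ∏_{0 ≤ i < j ≤ n} (b_i − b_j) in ℤ[i]. -/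
open Polynomial

private lemma prod_Ioi_eq_prod_filter {R : Type*} [CommMonoid R] {m : ℕ}
    (g : Fin m → Fin m → R) :
    (∏ i : Fin m, ∏ j ∈ Finset.Ioi i, g i j)
      = ∏ ij ∈ Finset.univ.filter (fun ij : Fin m × Fin m => ij.1 < ij.2), g ij.1 ij.2 := by
  rw [Finset.prod_sigma']
  refine Finset.prod_bij (fun x _ => (x.1, x.2)) ?_ ?_ ?_ ?_
  · rintro ⟨i, j⟩ h
    simp only [Finset.mem_sigma, Finset.mem_Ioi] at h
    simp [h.2]
  · rintro ⟨i, j⟩ h ⟨i', j'⟩ h' hij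
    simp only [Prod.mk.injEq] at hij
    obtain ⟨h1, h2⟩ := hij
    subst h1; subst h2; rfl
  · rintro ⟨i, j⟩ h
    simp only [Finset.mem_filter] at h
    exact ⟨⟨i, j⟩, by simp [h.2], rfl⟩
  · intros; rfl

set_option synthInstance.maxHeartbeats 1000000 in
set_option maxHeartbeats 1000000 in
/-- The volume of an `n`-universal set of `n + 1` distinct Gaussian integers divides
the volume of any family of `n + 1` distinct Gaussian integers. -/
theorem universal_volume_dvd (n : ℕ) (c b : Fin (n + 1) → GaussianInt)
    (hc : Function.Injective c) (hb : Function.Injective b)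
    (huniv : IsNUniversal n (Set.range c)) :
    volume c ∣ volume b := by
  classical
  have hι : Function.Injective ι := IsFractionRing.injective GaussianInt FF
  set v : Fin (n + 1) → FF := fun i => ι (c i) with hv
  have hvinj : Set.InjOn v (Finset.univ : Finset (Fin (n + 1))) :=
    (hι.comp hc).injOn
  set ℓ : Fin (n + 1) → FF[X] := fun j => Lagrange.basis Finset.univ v j with hℓ
  -- each Lagrange basis polynomial is integer-valued
  have hIV : ∀ j, IntegerValued (ℓ j) := by
    intro j
    apply huniv
    · rw [hℓ]
      simp only
      rw [Lagrange.natDegree_basis hvinj (Finset.mem_univ j)]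
      simp
    · rintro _ ⟨i, rfl⟩
      by_cases hij : i = j
      · subst hij
        rw [show ι (c i) = v i from rfl,
          Lagrange.eval_basis_self hvinj (Finset.mem_univ i)]
        exact ⟨1, map_one ι⟩
      · rw [show ι (c i) = v i from rfl,
          Lagrange.eval_basis_of_ne (Ne.symm hij) (Finset.mem_univ i)]
        exact ⟨0, map_zero ι⟩
  -- choose the integer values at the points b
  have hm : ∀ k j, ∃ z : GaussianInt, ι z = (ℓ j).eval (ι (b k)) := by
    intro k j
    obtain ⟨z, hz⟩ := hIV j (b k)
    exact ⟨z, hz⟩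
  choose m hmspec using hm
  set M : Matrix (Fin (n + 1)) (Fin (n + 1)) GaussianInt := Matrix.of m with hM
  -- matrix identity : vandermonde b = (M.map ι) * vandermonde c
  have key : Matrix.vandermonde (fun k => ι (b k)) = (M.map ι) * Matrix.vandermonde v := by
    ext k d
    rw [Matrix.mul_apply]
    simp only [Matrix.vandermonde_apply, Matrix.map_apply, hM, Matrix.of_apply, hmspec]
    -- use that X^d is reproduced by Lagrange interpolation
    have hd : ((X : FF[X]) ^ (d : ℕ)).degree < (Finset.univ : Finset (Fin (n + 1))).card := by
      rw [degree_X_pow]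
      simp only [Finset.card_univ, Fintype.card_fin]
      exact_mod_cast d.isLt
    have := Lagrange.eq_interpolate hvinj hd
    have heval := congrArg (Polynomial.eval (ι (b k))) this
    rw [Lagrange.interpolate_apply, Polynomial.eval_finset_sum] at heval
    simp only [eval_pow, eval_X, eval_mul, eval_C] at heval
    rw [heval]
    exact Finset.sum_congr rfl fun j _ => by rw [mul_comm]
  -- take determinants
  have hdet : (Matrix.vandermonde (fun k => ι (b k))).det
      = ι M.det * (Matrix.vandermonde v).det := by
    rw [key, Matrix.det_mul, RingHom.map_det]
    rfl
  -- rewrite vandermonde determinants in terms of volumes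
  have hvdm : ∀ x : Fin (n + 1) → GaussianInt,
      (Matrix.vandermonde (fun k => ι (x k))).det
        = (-1) ^ (Finset.univ.filter
            (fun ij : Fin (n + 1) × Fin (n + 1) => ij.1 < ij.2)).card * ι (volume x) := by
    intro x
    rw [Matrix.det_vandermonde, prod_Ioi_eq_prod_filter (fun i j => ι (x j) - ι (x i))]
    rw [volume, map_prod]
    rw [← Finset.prod_const, ← Finset.prod_mul_distrib]
    refine Finset.prod_congr rfl fun ij _ => ?_
    rw [map_sub]
    ring
  have hvb := hvdm b
  have hvc := hvdm c
  rw [hvb, hvc] at hdet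
  have hne : ((-1 : FF) ^ (Finset.univ.filter
      (fun ij : Fin (n + 1) × Fin (n + 1) => ij.1 < ij.2)).card) ≠ 0 :=
    pow_ne_zero _ (neg_ne_zero.mpr one_ne_zero)
  have h2 : ι (volume b) = ι (volume c) * ι M.det := by
    rw [mul_comm (ι M.det), mul_assoc] at hdet
    exact mul_left_cancel₀ hne hdet
  have h2' : ι (volume b) = ι (volume c * M.det) := by rw [map_mul, h2]
  exact ⟨M.det, hι h2'⟩
end

section
/- The set {0, 1, 2, i, 1+i, 2+i} ⊆ ℤ[i] is a 5-universal set: every polynomial f with coefficients in the fraction field of ℤ[i] of degree at most 5 satisfying f(0), f(1), f(2), f(i), f(1+i), f(2+i) ∈ ℤ[i] takes values in ℤ[i] at every Gaussian integer. -/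
/-!
Lagrange interpolation at the six nodes `c₀, …, c₅` writes `f(z)` as `∑ₖ f(cₖ) Lₖ(z)` with
`Lₖ(z) = ∏_{j ≠ k} (z - cⱼ) / ∏_{j ≠ k} (cₖ - cⱼ)`, so it suffices that every denominator
divides the corresponding numerator for all `z ∈ ℤ[i]`. Each denominator divides `20`, hence
that divisibility only depends on `z` modulo `20`, which leaves a finite check.
-/

open Polynomial

open Finset Lagrange

section

variable {R K α : Type*} [CommRing R] [Field K] [Algebra R K] [DecidableEq α]

theorem algebraMap_div_mem_range_of_dvd {a b : R} (h : a ∣ b) :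
    algebraMap R K b / algebraMap R K a ∈ (algebraMap R K).range := by
  obtain ⟨q, rfl⟩ := h
  by_cases ha : algebraMap R K a = 0
  · simp [ha]
  · exact ⟨q, by rw [map_mul, mul_div_cancel_left₀ _ ha]⟩

theorem Lagrange.eval_basis_algebraMap (s : Finset α) (c : α → R) (k : α) (z : R) :
    (Lagrange.basis s (algebraMap R K ∘ c) k).eval (algebraMap R K z) =
      algebraMap R K ((nodal (s.erase k) c).eval z) /
        algebraMap R K ((nodal (s.erase k) c).eval (c k)) := by
  simp only [Lagrange.basis, basisDivisor, eval_prod, eval_nodal, map_prod, map_sub,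
    div_eq_mul_inv, ← prod_inv_distrib, ← prod_mul_distrib]
  refine prod_congr rfl fun j _ => ?_
  simp [mul_comm]

theorem Lagrange.eval_algebraMap_mem_range_of_nodal_dvd [FaithfulSMul R K] {s : Finset α}
    {c : α → R} (hc : Set.InjOn c s)
    (hdvd : ∀ k ∈ s, ∀ z, (nodal (s.erase k) c).eval (c k) ∣ (nodal (s.erase k) c).eval z)
    {f : K[X]} (hdeg : f.degree < #s)
    (hf : ∀ k ∈ s, f.eval (algebraMap R K (c k)) ∈ (algebraMap R K).range) (z : R) :
    f.eval (algebraMap R K z) ∈ (algebraMap R K).range := by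
  have hv : Set.InjOn (algebraMap R K ∘ c) s :=
    (FaithfulSMul.algebraMap_injective R K).comp_injOn hc
  rw [eq_interpolate hv hdeg, interpolate_apply, eval_finsetSum]
  refine Subring.sum_mem _ fun k hk => ?_
  rw [eval_mul, eval_C, eval_basis_algebraMap]
  exact Subring.mul_mem _ (hf k hk) (algebraMap_div_mem_range_of_dvd (hdvd k hk z))

end

theorem GaussianInt.dvd_iff_norm_dvd_star_mul {a b : GaussianInt} (ha : a ≠ 0) :
    a ∣ b ↔ a.norm ∣ (star a * b).re ∧ a.norm ∣ (star a * b).im := by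
  rw [← Zsqrtd.intCast_dvd, Zsqrtd.norm_eq_mul_conj]
  constructor
  · rintro ⟨q, rfl⟩
    exact ⟨q, by ring⟩
  · rintro ⟨q, hq⟩
    refine ⟨q, mul_left_cancel₀ (star_ne_zero.mpr ha) ?_⟩
    rw [hq]
    ring

instance : DecidableRel (α := GaussianInt) (· ∣ ·) := fun a b =>
  if ha : a = 0 then decidable_of_iff (b = 0) (by simp [ha])
  else decidable_of_iff _ (GaussianInt.dvd_iff_norm_dvd_star_mul ha).symm

theorem Zsqrtd.dvd_eval_of_forall_fin {d : ℤ} {a : ℤ√d} {m : ℕ} [NeZero m]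
    (ham : a ∣ ((m : ℤ) : ℤ√d)) {p : (ℤ√d)[X]} (h : ∀ x y : Fin m, a ∣ p.eval ⟨x, y⟩)
    (z : ℤ√d) : a ∣ p.eval z := by
  have hm : (0 : ℤ) < m := by exact_mod_cast Nat.pos_of_neZero m
  set r : ℤ√d := ⟨z.re % m, z.im % m⟩
  have hzr : ((m : ℤ) : ℤ√d) ∣ z - r := (intCast_dvd _ _).mpr
    ⟨Int.dvd_self_sub_of_emod_eq rfl, Int.dvd_self_sub_of_emod_eq rfl⟩
  have hr : a ∣ p.eval r := by
    have hre := Int.emod_nonneg z.re hm.ne'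
    have him := Int.emod_nonneg z.im hm.ne'
    have := Int.emod_lt_of_pos z.re hm
    have := Int.emod_lt_of_pos z.im hm
    simpa [r, Int.toNat_of_nonneg hre, Int.toNat_of_nonneg him] using
      h ⟨(z.re % m).toNat, by omega⟩ ⟨(z.im % m).toNat, by omega⟩
  simpa using dvd_add (ham.trans (hzr.trans (sub_dvd_eval_sub z r p))) hr

def sixPoints : Fin 6 → GaussianInt := ![0, 1, 2, ⟨0, 1⟩, ⟨1, 1⟩, ⟨2, 1⟩]

theorem sixPoints_injective : Function.Injective sixPoints := by decide

theorem nodal_sixPoints_dvd (k : Fin 6) (z : GaussianInt) :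
    (nodal (univ.erase k) sixPoints).eval (sixPoints k) ∣
      (nodal (univ.erase k) sixPoints).eval z := by
  fin_cases k <;>
    exact Zsqrtd.dvd_eval_of_forall_fin (m := 20) (by simp only [eval_nodal]; decide)
      (by simp only [eval_nodal]; decide) z

/-- The set `{0, 1, 2, i, 1 + i, 2 + i}` is a `5`-universal set in `ℤ[i]`. -/
theorem six_point_universal :
    IsNUniversal 5 ({0, 1, 2, ⟨0, 1⟩, ⟨1, 1⟩, ⟨2, 1⟩} : Set GaussianInt) := by
  intro f hdeg hvals z
  have hdeg' : f.degree < #(univ : Finset (Fin 6)) := by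
    rw [card_univ, Fintype.card_fin]
    exact f.degree_le_natDegree.trans_lt (by exact_mod_cast hdeg.trans_lt (by norm_num))
  have hnodes : ∀ k ∈ univ, f.eval (algebraMap GaussianInt FF (sixPoints k)) ∈
      (algebraMap GaussianInt FF).range := fun k _ =>
    hvals _ (by fin_cases k <;> simp [sixPoints])
  exact eval_algebraMap_mem_range_of_nodal_dvd sixPoints_injective.injOn
    (fun k _ => nodal_sixPoints_dvd k) hdeg' hnodes z
end

section
/- There is no 4-universal set of cardinality 5 in ℤ[i]: for every set C ⊆ ℤ[i] with |C| = 5, there exists a polynomial f with coefficients in the fraction field of ℤ[i] of degree at most 4 such that f(C) ⊆ ℤ[i] but f is not integer-valued. -/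
open Polynomial

/-!
For `r ∈ C` and `δ ≠ 0`, the polynomial `(1/δ) ∏_{c ≠ r} (X - c)` vanishes on `C \ {r}`, is
integral at `r` when `δ ∣ ∏_{c ≠ r} (r - c)`, and is not integer-valued when
`δ ∤ ∏_{c ≠ r} (z - c)` for some `z`. Such `r, δ, z` exist for every five-point `C`.

If a prime `p ∤ 2` divides a difference `r - s` of points of `C`, take `δ = p`: the points
`0, 1, 2, 1 ± i` are pairwise incongruent mod `p` (their differences have norm dividing `4`), so
the four points `c ≠ r` miss some residue class `z` mod `p`.

Otherwise every difference is a unit times a power of `π = 1 + i`, and `δ` is a power of `π`.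
Some class mod `π` contains at least three points, and the classes have sizes `5 + 0`, `4 + 1` or
`3 + 2`; in each case an explicit `z` (`r + 1`, `t + π` or `s + π²`) has
`v_π ∏_{c ≠ r} (z - c) < v_π ∏_{c ≠ r} (r - c)`. The one global input is needed for a split
`{x, y, c} ∪ {s, t}` with `x ≡ y mod π²`: if `x - y = 2w` with `w` a unit, then the units
`x - s, y - s` differ by `2w`, which in `ℤ[i]` forces `x - s = w`; likewise `x - t = w`, so `s = t`.
Hence `π³ ∣ x - y`.
-/

namespace FivePoint

open Finset

lemma mul_dvd_prod_of_ne {α M : Type*} [CommMonoid M] [DecidableEq α] {s : Finset α}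
    {f : α → M} {a b : α} (ha : a ∈ s) (hb : b ∈ s) (hab : a ≠ b) :
    f a * f b ∣ ∏ i ∈ s, f i := by
  rw [← prod_pair hab]
  exact prod_dvd_prod_of_subset _ _ f (insert_subset ha (singleton_subset_iff.2 hb))

lemma not_pow_dvd_prod_of_subset {α M : Type*} [CommMonoidWithZero M] [IsCancelMulZero M]
    [DecidableEq α] {p : M} (hp : Prime p) {s t : Finset α} (hts : t ⊆ s) {f : α → M} {n : ℕ}
    (ht : ¬ p ^ n ∣ ∏ i ∈ t, f i) (hrest : ∀ i ∈ s \ t, ¬ p ∣ f i) :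
    ¬ p ^ n ∣ ∏ i ∈ s, f i := by
  rw [← prod_sdiff hts]
  refine fun h => ht (hp.pow_dvd_of_dvd_mul_left n (fun h' => ?_) h)
  obtain ⟨i, hi, hpi⟩ := hp.exists_mem_finset_dvd h'
  exact hrest i hi hpi

lemma inv_mul_mem_range_algebraMap_iff {R K : Type*} [CommRing R] [IsDomain R] [Field K]
    [Algebra R K] [IsFractionRing R K] {δ : R} (hδ : δ ≠ 0) (a : R) :
    (algebraMap R K δ)⁻¹ * algebraMap R K a ∈ Set.range (algebraMap R K) ↔ δ ∣ a := by
  have hδ' : algebraMap R K δ ≠ 0 := (map_ne_zero_iff _ (IsFractionRing.injective R K)).2 hδ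
  constructor
  · rintro ⟨b, hb⟩
    refine ⟨b, IsFractionRing.injective R K ?_⟩
    rw [map_mul, hb, mul_inv_cancel_left₀ hδ']
  · rintro ⟨b, rfl⟩
    exact ⟨b, by rw [map_mul, inv_mul_cancel_left₀ hδ']⟩

def HasLagrangeObstruction (S : Finset GaussianInt) : Prop :=
  ∃ r ∈ S, ∃ δ z : GaussianInt, δ ≠ 0 ∧ δ ∣ ∏ c ∈ S.erase r, (r - c) ∧
    ¬ δ ∣ ∏ c ∈ S.erase r, (z - c)

lemma exists_polynomial_of_hasLagrangeObstruction {S : Finset GaussianInt}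
    (h : HasLagrangeObstruction S) :
    ∃ f : FF[X], f.natDegree ≤ #S - 1 ∧ (∀ c ∈ S, f.eval (ι c) ∈ Set.range ι) ∧
      ¬ IntegerValued f := by
  obtain ⟨r, hr, δ, z, hδ, hdvd, hndvd⟩ := h
  set f : FF[X] := C (ι δ)⁻¹ * ∏ c ∈ S.erase r, (X - C (ι c))
  have hf (w : GaussianInt) : f.eval (ι w) ∈ Set.range ι ↔ δ ∣ ∏ c ∈ S.erase r, (w - c) := by
    have : f.eval (ι w) = (ι δ)⁻¹ * ι (∏ c ∈ S.erase r, (w - c)) := by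
      simp [f, eval_prod, map_prod]
    rw [this]
    exact inv_mul_mem_range_algebraMap_iff hδ _
  refine ⟨f, ?_, fun c hc => (hf c).2 ?_, fun hint => hndvd ((hf z).1 (hint z))⟩
  · calc f.natDegree ≤ (∏ c ∈ S.erase r, (X - C (ι c))).natDegree := natDegree_C_mul_le _ _
      _ = #S - 1 := by rw [natDegree_finsetProd_X_sub_C_eq_card, card_erase_of_mem hr]
  · obtain rfl | hcr := eq_or_ne c r
    · exact hdvd
    · rw [prod_eq_zero (mem_erase.2 ⟨hcr, hc⟩) (sub_self c)]
      exact dvd_zero δ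

lemma exists_not_dvd_prod_sub {p : GaussianInt} (hp : Prime p) (hp2 : ¬ p ∣ 2)
    {D : Finset GaussianInt} (hD : #D < 5) : ∃ z, ¬ p ∣ ∏ c ∈ D, (z - c) := by
  by_contra! h
  set T : Finset GaussianInt := {0, 1, 2, ⟨1, 1⟩, ⟨1, -1⟩}
  have hT : #T = 5 := by decide
  have hTnorm : ∀ t ∈ T, ∀ t' ∈ T, t ≠ t' → (t - t').norm ∣ 2 ^ 2 := by decide
  choose! g hgD hg using fun t (_ : t ∈ T) => hp.exists_mem_finset_dvd (h t)
  obtain ⟨t, ht, t', ht', hne, hgt⟩ := exists_ne_map_eq_of_card_lt_of_maps_to (hT ▸ hD) hgD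
  have hpt : p ∣ t - t' := by simpa [hgt] using dvd_sub (hg t ht) (hg t' ht')
  have hnorm : ((t - t').norm : GaussianInt) ∣ 2 ^ 2 := by
    exact_mod_cast Int.cast_dvd_cast _ _ (hTnorm t ht t' ht' hne)
  have hpnorm : p ∣ ((t - t').norm : GaussianInt) :=
    hpt.trans ⟨star (t - t'), Zsqrtd.norm_eq_mul_conj _⟩
  exact hp2 (hp.dvd_of_dvd_pow (hpnorm.trans hnorm))

lemma hasLagrangeObstruction_of_prime_dvd_sub {S : Finset GaussianInt} (hS : #S ≤ 5)
    {x y p : GaussianInt} (hx : x ∈ S) (hy : y ∈ S) (hxy : x ≠ y) (hp : Prime p)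
    (hp2 : ¬ p ∣ 2) (hpxy : p ∣ x - y) : HasLagrangeObstruction S := by
  obtain ⟨z, hz⟩ := exists_not_dvd_prod_sub hp hp2 (D := S.erase x)
    (by rw [card_erase_of_mem hx]; omega)
  exact ⟨x, hx, p, z, hp.ne_zero, hpxy.trans (dvd_prod_of_mem _ (mem_erase.2 ⟨hxy.symm, hy⟩)), hz⟩

def onePlusI : GaussianInt := ⟨1, 1⟩

local notation "π" => onePlusI

lemma onePlusI_sq : π ^ 2 = 2 * ⟨0, 1⟩ := by decide

lemma onePlusI_dvd_iff (x : GaussianInt) : π ∣ x ↔ 2 ∣ x.re + x.im := by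
  constructor
  · rintro ⟨c, rfl⟩
    exact ⟨c.re, by simp [onePlusI]; ring⟩
  · intro h
    refine ⟨⟨(x.re + x.im) / 2, (x.im - x.re) / 2⟩, ?_⟩
    ext <;> simp [onePlusI] <;> omega

lemma onePlusI_dvd_sub_iff (x y : GaussianInt) :
    π ∣ x - y ↔ (x.re + x.im) % 2 = (y.re + y.im) % 2 := by
  rw [onePlusI_dvd_iff, Zsqrtd.re_sub, Zsqrtd.im_sub]; omega

lemma irreducible_onePlusI : Irreducible π := by
  refine ⟨fun h => by simp [← Zsqrtd.norm_eq_one_iff, Zsqrtd.norm_def, onePlusI] at h,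
    fun a b hab => ?_⟩
  have h2 : (a.norm.natAbs * b.norm.natAbs).Prime := by
    rw [← Int.natAbs_mul, ← Zsqrtd.norm_mul, ← hab]; exact Nat.prime_two
  rcases Nat.prime_mul_iff.1 h2 with ⟨-, h⟩ | ⟨-, h⟩
  · exact Or.inr (Zsqrtd.norm_eq_one_iff.1 h)
  · exact Or.inl (Zsqrtd.norm_eq_one_iff.1 h)

lemma prime_onePlusI : Prime π := irreducible_onePlusI.prime

lemma onePlusI_dvd_of_dvd_two {p : GaussianInt} (hp : Irreducible p) (h : p ∣ 2) : π ∣ p :=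
  hp.dvd_symm irreducible_onePlusI (hp.prime.dvd_of_dvd_pow (h.trans ⟨⟨0, 1⟩, onePlusI_sq⟩))

lemma isUnit_of_not_onePlusI_dvd {d : GaussianInt} (hd : ∀ p, Prime p → p ∣ d → p ∣ 2)
    (h : ¬ π ∣ d) : IsUnit d := by
  by_contra hu
  obtain ⟨p, hp, hpd⟩ :=
    WfDvdMonoid.exists_irreducible_factor hu (by rintro rfl; exact h (dvd_zero _))
  exact h ((onePlusI_dvd_of_dvd_two hp (hd p hp.prime hpd)).trans hpd)

def gaussUnits : Finset GaussianInt := {1, -1, ⟨0, 1⟩, ⟨0, -1⟩}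

lemma mem_gaussUnits_of_isUnit {u : GaussianInt} (hu : IsUnit u) : u ∈ gaussUnits := by
  have h := (Zsqrtd.norm_eq_one_iff' (by norm_num) u).2 hu
  obtain ⟨a, b⟩ := u
  replace h : a * a + b * b = 1 := by simpa [Zsqrtd.norm_def] using h
  have ha : -1 ≤ a ∧ a ≤ 1 := by constructor <;> nlinarith [mul_self_nonneg b]
  have hb : -1 ≤ b ∧ b ≤ 1 := by constructor <;> nlinarith [mul_self_nonneg a]
  obtain ⟨ha1, ha2⟩ := ha; obtain ⟨hb1, hb2⟩ := hb
  interval_cases a <;> interval_cases b <;> simp_all [gaussUnits] <;> decide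

lemma eq_of_isUnit_of_sub_eq_two_mul {u v w : GaussianInt} (hu : IsUnit u) (hv : IsUnit v)
    (hw : IsUnit w) (h : u - v = 2 * w) : u = w := by
  have key : ∀ u ∈ gaussUnits, ∀ v ∈ gaussUnits, ∀ w ∈ gaussUnits, u - v = 2 * w → u = w := by
    decide
  exact key u (mem_gaussUnits_of_isUnit hu) v (mem_gaussUnits_of_isUnit hv) w
    (mem_gaussUnits_of_isUnit hw) h

lemma onePlusI_pow_three_dvd_sub {x y s t : GaussianInt} (hst : s ≠ t)
    (hxy : ∀ p, Prime p → p ∣ x - y → p ∣ 2) (hsq : π ^ 2 ∣ x - y)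
    (hxs : IsUnit (x - s)) (hys : IsUnit (y - s)) (hxt : IsUnit (x - t))
    (hyt : IsUnit (y - t)) : π ^ 3 ∣ x - y := by
  by_contra h3
  obtain ⟨m, hm⟩ := hsq
  have hm1 : ¬ π ∣ m := fun h => h3 (hm ▸ pow_succ π 2 ▸ mul_dvd_mul_left _ h)
  have hmu : IsUnit m := isUnit_of_not_onePlusI_dvd
    (fun p hp hpm => hxy p hp (hpm.trans ⟨π ^ 2, hm.trans (mul_comm _ _)⟩)) hm1
  have hw : x - y = 2 * (⟨0, 1⟩ * m) := by rw [hm, onePlusI_sq]; ring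
  have hwu : IsUnit (⟨0, 1⟩ * m : GaussianInt) :=
    (IsUnit.of_mul_eq_one (b := ⟨0, -1⟩) (by decide)).mul hmu
  have h1 := eq_of_isUnit_of_sub_eq_two_mul hxs hys hwu (by rw [← hw]; ring)
  have h2 := eq_of_isUnit_of_sub_eq_two_mul hxt hyt hwu (by rw [← hw]; ring)
  exact hst (by linear_combination h2 - h1)

lemma onePlusI_sq_dvd_of_dvd {x y z : GaussianInt} (hxy : π ∣ x - y) (hxz : π ∣ x - z) :
    π ^ 2 ∣ x - y ∨ π ^ 2 ∣ x - z ∨ π ^ 2 ∣ y - z := by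
  obtain ⟨m, hm⟩ := hxy
  obtain ⟨n, hn⟩ := hxz
  have hyz : y - z = π * (n - m) := by linear_combination hn - hm
  have : π ∣ m ∨ π ∣ n ∨ π ∣ n - m := by
    simp only [onePlusI_dvd_iff, Zsqrtd.re_sub, Zsqrtd.im_sub]; omega
  rw [hm, hn, hyz, pow_two]
  rcases this with h | h | h
  exacts [Or.inl (mul_dvd_mul_left π h), Or.inr (Or.inl (mul_dvd_mul_left π h)),
    Or.inr (Or.inr (mul_dvd_mul_left π h))]

open Classical in
lemma exists_two_lt_card_filter_onePlusI_dvd {S : Finset GaussianInt} (hS : 4 < #S) :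
    ∃ a ∈ S, 2 < #(S.filter (π ∣ a - ·)) := by
  obtain ⟨k, -, hk⟩ := exists_lt_card_fiber_of_mul_lt_card_of_maps_to (t := ({0, 1} : Finset ℤ))
    (f := fun x : GaussianInt => (x.re + x.im) % 2) (n := 2) (fun x _ => by simp; omega)
    (by simpa using hS)
  obtain ⟨a, ha⟩ := card_pos.1 (by omega : 0 < #(S.filter fun x => (x.re + x.im) % 2 = k))
  rw [mem_filter] at ha
  refine ⟨a, ha.1, hk.trans_eq (congrArg card (filter_congr fun c _ => ?_))⟩
  rw [onePlusI_dvd_sub_iff, ha.2, eq_comm]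

lemma hasLagrangeObstruction_of_onePlusI_pow {S E : Finset GaussianInt} {r z : GaussianInt}
    {n : ℕ} (hr : r ∈ S) (hE : E ⊆ S.erase r) (hdvd : π ^ n ∣ ∏ c ∈ S.erase r, (r - c))
    (hE' : ¬ π ^ n ∣ ∏ c ∈ E, (z - c)) (hrest : ∀ c ∈ S.erase r \ E, ¬ π ∣ z - c) :
    HasLagrangeObstruction S :=
  ⟨r, hr, π ^ n, z, pow_ne_zero n prime_onePlusI.ne_zero, hdvd,
    not_pow_dvd_prod_of_subset prime_onePlusI hE hE' hrest⟩

lemma hasLagrangeObstruction_of_forall_onePlusI_dvd {S : Finset GaussianInt} {r c : GaussianInt}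
    (hr : r ∈ S) (hc : c ∈ S) (hrc : r ≠ c) (h : ∀ c ∈ S, π ∣ r - c) :
    HasLagrangeObstruction S := by
  refine hasLagrangeObstruction_of_onePlusI_pow (n := 1) (z := r + 1) hr (empty_subset _)
    ?_ (by simpa using prime_onePlusI.not_dvd_one) fun c' hc' hdvd => ?_
  · rw [pow_one]
    exact (h c hc).trans (dvd_prod_of_mem _ (mem_erase.2 ⟨hrc.symm, hc⟩))
  · rw [show r + 1 - c' = (r - c') + 1 by ring,
      dvd_add_right (h c' (mem_of_mem_erase (mem_sdiff.1 hc').1))] at hdvd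
    exact prime_onePlusI.not_dvd_one hdvd

lemma hasLagrangeObstruction_of_sq_dvd {S : Finset GaussianInt} {r t : GaussianInt}
    (hr : r ∈ S) (ht : t ∈ S) (hrt : r ≠ t) (hdvd : π ^ 2 ∣ ∏ c ∈ S.erase r, (r - c))
    (hsep : ∀ c ∈ S.erase r \ {t}, ¬ π ∣ t - c) : HasLagrangeObstruction S := by
  refine hasLagrangeObstruction_of_onePlusI_pow (z := t + π) hr
    (singleton_subset_iff.2 (mem_erase.2 ⟨hrt.symm, ht⟩)) hdvd ?_ fun c hc hdvd => ?_
  · rw [prod_singleton, add_sub_cancel_left, pow_two]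
    exact fun h => prime_onePlusI.not_dvd_one
      ((mul_dvd_mul_iff_left prime_onePlusI.ne_zero).1 (by rwa [mul_one]))
  · rw [show t + π - c = (t - c) + π by ring, dvd_add_left (dvd_refl π)] at hdvd
    exact hsep c hc hdvd

lemma hasLagrangeObstruction_of_pow_three_dvd {S A : Finset GaussianInt}
    {x y c s t : GaussianInt} (hAS : A ⊆ S) (hx : x ∈ A) (hy : y ∈ A) (hc : c ∈ A) (hxy : x ≠ y)
    (hxc : x ≠ c) (hyc : y ≠ c) (hxy3 : π ^ 3 ∣ x - y) (hxc1 : π ∣ x - c) (hs : s ∈ S)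
    (ht : t ∈ S) (hst : π ∣ s - t) (hst2 : ¬ π ^ 2 ∣ s - t) (hsA : ∀ c ∈ A, ¬ π ∣ s - c)
    (hcover : ∀ c ∈ S, c ≠ s → c ≠ t → c ∈ A) : HasLagrangeObstruction S := by
  have hsne : s ≠ t := by rintro rfl; exact hst2 (by simp)
  have hsx : s ≠ x := by rintro rfl; exact hsA s hx (by simp)
  have htx : t ≠ x := by rintro rfl; exact hsA t hx hst
  obtain ⟨m, hm⟩ := hst
  have hm1 : ¬ π ∣ m + π := by
    rw [dvd_add_left (dvd_refl π)]
    exact fun h => hst2 (hm ▸ pow_two π ▸ mul_dvd_mul_left π h)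
  refine hasLagrangeObstruction_of_onePlusI_pow (n := 4) (z := s + π ^ 2) (hAS hx)
    (insert_subset (mem_erase.2 ⟨hsx, hs⟩) (singleton_subset_iff.2 (mem_erase.2 ⟨htx, ht⟩)))
    ?_ ?_ fun c' hc' hdvd => ?_
  · rw [pow_succ]
    exact (mul_dvd_mul hxy3 hxc1).trans (mul_dvd_prod_of_ne (mem_erase.2 ⟨hxy.symm, hAS hy⟩)
      (mem_erase.2 ⟨hxc.symm, hAS hc⟩) hyc)
  · rw [prod_pair hsne, show (s + π ^ 2 - s) * (s + π ^ 2 - t) = π ^ 3 * (m + π) by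
      rw [show s + π ^ 2 - t = (s - t) + π ^ 2 by ring, hm]; ring, pow_succ,
      mul_dvd_mul_iff_left (pow_ne_zero 3 prime_onePlusI.ne_zero)]
    exact hm1
  · simp only [mem_sdiff, mem_erase, mem_insert, mem_singleton, not_or] at hc'
    rw [show s + π ^ 2 - c' = (s - c') + π ^ 2 by ring,
      dvd_add_left (dvd_pow_self π two_ne_zero)] at hdvd
    exact hsA c' (hcover c' hc'.1.2 hc'.2.1 hc'.2.2) hdvd

lemma hasLagrangeObstruction_of_split_four_one {S A : Finset GaussianInt} {t : GaussianInt}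
    (hAS : A ⊆ S) (hA : 2 < #A) (hAA : ∀ c ∈ A, ∀ d ∈ A, π ∣ c - d) (ht : t ∈ S)
    (htA : ∀ c ∈ A, ¬ π ∣ t - c) (hcover : ∀ c ∈ S, c ≠ t → c ∈ A) :
    HasLagrangeObstruction S := by
  obtain ⟨r, y, c, hr, hy, hc, hry, hrc, hyc⟩ := two_lt_card_iff.1 hA
  refine hasLagrangeObstruction_of_sq_dvd (hAS hr) ht (fun h => htA r hr (by simp [h])) ?_
    fun c hc => ?_
  · rw [pow_two]
    exact (mul_dvd_mul (hAA r hr y hy) (hAA r hr c hc)).trans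
      (mul_dvd_prod_of_ne (mem_erase.2 ⟨hry.symm, hAS hy⟩) (mem_erase.2 ⟨hrc.symm, hAS hc⟩) hyc)
  · simp only [mem_sdiff, mem_erase, mem_singleton] at hc
    exact htA c (hcover c hc.1.2 hc.2)

lemma hasLagrangeObstruction_of_split_three_two {S A : Finset GaussianInt} {s t : GaussianInt}
    (h2 : ∀ x ∈ S, ∀ y ∈ S, x ≠ y → ∀ p, Prime p → p ∣ x - y → p ∣ 2)
    (hAS : A ⊆ S) (hA : 2 < #A) (hAA : ∀ c ∈ A, ∀ d ∈ A, π ∣ c - d)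
    (hs : s ∈ S) (ht : t ∈ S) (hsne : s ≠ t) (hsA : ∀ c ∈ A, ¬ π ∣ s - c)
    (htA : ∀ c ∈ A, ¬ π ∣ t - c) (hcover : ∀ c ∈ S, c ≠ s → c ≠ t → c ∈ A) :
    HasLagrangeObstruction S := by
  obtain ⟨x, y, c, hx, hy, hc, hxy, hxc, hyc⟩ := two_lt_card_iff.1 hA
  have hst : π ∣ s - t := by
    have := hsA x hx; have := htA x hx
    simp only [onePlusI_dvd_sub_iff] at *; omega
  by_cases hst2 : π ^ 2 ∣ s - t
  · refine hasLagrangeObstruction_of_sq_dvd hs ht hsne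
      (hst2.trans (dvd_prod_of_mem _ (mem_erase.2 ⟨hsne.symm, ht⟩))) fun c hc => ?_
    simp only [mem_sdiff, mem_erase, mem_singleton] at hc
    exact htA c (hcover c hc.1.2 hc.1.1 hc.2)
  have hunit : ∀ u ∈ S, (∀ c ∈ A, ¬ π ∣ u - c) → ∀ x ∈ A, IsUnit (x - u) :=
    fun u huS hu x hx => isUnit_of_not_onePlusI_dvd
      (h2 x (hAS hx) u huS (by rintro rfl; exact hu x hx (by simp)))
      fun h => hu x hx (by simpa using dvd_neg.2 h)
  have key : ∀ x ∈ A, ∀ y ∈ A, ∀ c ∈ A, x ≠ y → x ≠ c → y ≠ c → π ^ 2 ∣ x - y →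
      HasLagrangeObstruction S := fun x hx y hy c hc hxy hxc hyc hsq =>
    hasLagrangeObstruction_of_pow_three_dvd hAS hx hy hc hxy hxc hyc
      (onePlusI_pow_three_dvd_sub hsne (h2 x (hAS hx) y (hAS hy) hxy) hsq
        (hunit s hs hsA x hx) (hunit s hs hsA y hy) (hunit t ht htA x hx) (hunit t ht htA y hy))
      (hAA x hx c hc) hs ht hst hst2 hsA hcover
  rcases onePlusI_sq_dvd_of_dvd (hAA x hx y hy) (hAA x hx c hc) with h | h | h
  · exact key x hx y hy c hc hxy hxc hyc h
  · exact key x hx c hc y hy hxc hxy hyc.symm h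
  · exact key y hy c hc x hx hyc hxy.symm hxc.symm h

lemma hasLagrangeObstruction_of_two_adic {S : Finset GaussianInt} (hS : #S = 5)
    (h2 : ∀ x ∈ S, ∀ y ∈ S, x ≠ y → ∀ p, Prime p → p ∣ x - y → p ∣ 2) :
    HasLagrangeObstruction S := by
  classical
  obtain ⟨a, ha, hA⟩ := exists_two_lt_card_filter_onePlusI_dvd (by omega : 4 < #S)
  set A := S.filter (π ∣ a - ·)
  set B := S.filter (¬ π ∣ a - ·)
  have hAB : #A + #B = 5 := hS ▸ card_filter_add_card_filter_not (π ∣ a - ·)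
  have hAA : ∀ c ∈ A, ∀ d ∈ A, π ∣ c - d := by
    simp only [A, mem_filter, onePlusI_dvd_sub_iff]; omega
  have hBA : ∀ c ∈ B, ∀ d ∈ A, ¬ π ∣ c - d := by
    simp only [A, B, mem_filter, onePlusI_dvd_sub_iff]; omega
  have hcover : ∀ c ∈ S, c ∉ B → c ∈ A := fun c hc hcB => by simp_all [A, B]
  rcases (by omega : #B = 0 ∨ #B = 1 ∨ #B = 2) with hB | hB | hB
  · obtain ⟨c, hc, hca⟩ := exists_mem_ne (by omega : 1 < #S) a
    exact hasLagrangeObstruction_of_forall_onePlusI_dvd ha hc hca.symm fun d hd =>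
      hAA a (mem_filter.2 ⟨ha, by simp⟩) d (hcover d hd (by simp [card_eq_zero.1 hB]))
  · obtain ⟨t, hBt⟩ := card_eq_one.1 hB
    have htB : t ∈ B := by simp [hBt]
    exact hasLagrangeObstruction_of_split_four_one (filter_subset _ _) hA hAA
      (filter_subset _ _ htB) (hBA t htB) fun c hc hct => hcover c hc (by simp [hBt, hct])
  · obtain ⟨s, t, hst, hBst⟩ := card_eq_two.1 hB
    have hsB : s ∈ B := by simp [hBst]
    have htB : t ∈ B := by simp [hBst]
    exact hasLagrangeObstruction_of_split_three_two h2 (filter_subset _ _) hA hAA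
      (filter_subset _ _ hsB) (filter_subset _ _ htB) hst (hBA s hsB) (hBA t htB)
      fun c hc hcs hct => hcover c hc (by simp [hBst, hcs, hct])

end FivePoint

open FivePoint

/-- There is no `4`-universal set of cardinality `5` in `ℤ[i]`. -/
theorem no_five_point_four_universal (C : Finset GaussianInt) (hcard : C.card = 5) :
    ∃ f : FF[X], f.natDegree ≤ 4 ∧ (∀ c ∈ C, f.eval (ι c) ∈ Set.range ι) ∧
      ¬ IntegerValued f := by
  have hobs : HasLagrangeObstruction C := by
    by_cases hodd : ∃ x ∈ C, ∃ y ∈ C, x ≠ y ∧ ∃ p, Prime p ∧ p ∣ x - y ∧ ¬ p ∣ 2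
    · obtain ⟨x, hx, y, hy, hxy, p, hp, hpxy, hp2⟩ := hodd
      exact hasLagrangeObstruction_of_prime_dvd_sub hcard.le hx hy hxy hp hp2 hpxy
    · push Not at hodd
      exact hasLagrangeObstruction_of_two_adic hcard hodd
  simpa [hcard] using exists_polynomial_of_hasLagrangeObstruction hobs
end

section
/- Let C ⊆ ℤ[i] be an n-universal set of cardinality n+1, and let p be a prime element of ℤ[i] with norm ‖p‖ > n. Then no two distinct elements of C are congruent modulo p, i.e., the difference of any two distinct elements of C is never divisible by p. -/
open Polynomial

noncomputable def giEquiv : GaussianInt ≃ₗ[ℤ] (Fin 2 → ℤ) where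
  toFun z := ![z.re, z.im]
  invFun v := ⟨v 0, v 1⟩
  map_add' x y := by funext i; fin_cases i <;> simp
  map_smul' m x := by
    funext i
    fin_cases i <;> simp [zsmul_eq_mul, Zsqrtd.re_mul, Zsqrtd.im_mul]
  left_inv z := by simp
  right_inv v := by funext i; fin_cases i <;> simp

noncomputable def giBasis : Module.Basis (Fin 2) ℤ GaussianInt := Module.Basis.ofEquivFun giEquiv

instance inst_s17 : Module.Free ℤ GaussianInt := Module.Free.of_basis giBasis
instance inst_s17_2 : Module.Finite ℤ GaussianInt := Module.Finite.of_basis giBasis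

lemma algNorm_eq (x : GaussianInt) : Algebra.norm ℤ x = Zsqrtd.norm x := by
  rw [Algebra.norm_eq_matrix_det giBasis, Matrix.det_fin_two]
  simp [Algebra.leftMulMatrix_eq_repr_mul, giBasis, giEquiv, Zsqrtd.norm,
    Zsqrtd.re_mul, Zsqrtd.im_mul]

lemma card_quot_eq (p : GaussianInt) :
    Nat.card (GaussianInt ⧸ Ideal.span {p}) = (Zsqrtd.norm p).natAbs := by
  rw [← Submodule.cardQuot_apply, ← Ideal.absNorm_apply, Ideal.absNorm_span_singleton,
    algNorm_eq]

/-- If `C` is an `n`-universal set of cardinality `n + 1` and `p` is a prime of `ℤ[i]`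
of norm greater than `n`, then no two distinct elements of `C` are congruent modulo `p`. -/
theorem universal_no_congruent_pairs (n : ℕ) (C : Finset GaussianInt)
    (hcard : C.card = n + 1) (huniv : IsNUniversal n (C : Set GaussianInt))
    (p : GaussianInt) (hp : Prime p) (hnorm : (n : ℤ) < Zsqrtd.norm p) :
    ∀ c ∈ C, ∀ c' ∈ C, c ≠ c' → ¬ p ∣ (c - c') := by
  classical
  intro c hc c' hc' hne hdvd
  have hι : Function.Injective ι := IsFractionRing.injective GaussianInt FF
  have hp0 : p ≠ 0 := hp.ne_zero
  have hιp : ι p ≠ 0 := fun h => hp0 (hι (by simpa using h))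
  set S : Finset GaussianInt := C.erase c' with hS
  have hcS : c ∈ S := Finset.mem_erase.mpr ⟨hne, hc⟩
  have hScard : S.card = n := by rw [hS, Finset.card_erase_of_mem hc', hcard]; omega
  -- find z not congruent to any element of S mod p
  have hnatAbs : ((Zsqrtd.norm p).natAbs : ℤ) = Zsqrtd.norm p :=
    Int.natAbs_of_nonneg (GaussianInt.norm_nonneg p)
  have hcardQ : n < Nat.card (GaussianInt ⧸ Ideal.span {p}) := by
    rw [card_quot_eq]; omega
  haveI : Finite (GaussianInt ⧸ Ideal.span {p}) :=
    Nat.finite_of_card_ne_zero (by omega)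
  haveI : Fintype (GaussianInt ⧸ Ideal.span {p}) := Fintype.ofFinite _
  set T : Finset (GaussianInt ⧸ Ideal.span {p}) :=
    S.image (Ideal.Quotient.mk (Ideal.span {p})) with hT
  obtain ⟨q, hq⟩ : ∃ q, q ∉ T := by
    by_contra h
    push_neg at h
    have h1 : Finset.univ ⊆ T := fun x _ => h x
    have h2 := Finset.card_le_card h1
    have h3 : T.card ≤ n := by rw [hT, ← hScard]; exact Finset.card_image_le
    rw [Finset.card_univ, ← Nat.card_eq_fintype_card] at h2
    omega
  obtain ⟨z, rfl⟩ := Ideal.Quotient.mk_surjective q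
  have hz : ∀ d ∈ S, ¬ p ∣ (z - d) := by
    intro d hd hdvd'
    refine hq ?_
    rw [hT]
    exact Finset.mem_image.mpr ⟨d, hd,
      (Ideal.Quotient.eq.mpr (Ideal.mem_span_singleton.mpr hdvd')).symm⟩
  -- the polynomial
  set g : FF[X] := ∏ d ∈ S, (X - Polynomial.C (ι d)) with hg
  set f : FF[X] := Polynomial.C (ι p)⁻¹ * g with hf
  have hgdeg : g.natDegree = n := by
    rw [hg, Polynomial.natDegree_prod _ _ (fun i _ => Polynomial.X_sub_C_ne_zero _)]
    simp [hScard]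
  have hfdeg : f.natDegree ≤ n :=
    le_trans (Polynomial.natDegree_C_mul_le _ _) (le_of_eq hgdeg)
  have hgeval : ∀ a : GaussianInt, g.eval (ι a) = ι (∏ d ∈ S, (a - d)) := by
    intro a
    rw [hg, Polynomial.eval_prod, map_prod]
    simp [map_sub]
  have hvals : ∀ e ∈ (C : Set GaussianInt), f.eval (ι e) ∈ Set.range ι := by
    intro e he
    rcases eq_or_ne e c' with rfl | hec'
    · have hpc : p ∣ (e - c) := by
        have := dvd_neg.mpr hdvd
        rwa [neg_sub] at this
      have hpprod : p ∣ ∏ d ∈ S, (e - d) :=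
        dvd_trans hpc (Finset.dvd_prod_of_mem _ hcS)
      obtain ⟨t, ht⟩ := hpprod
      refine ⟨t, ?_⟩
      rw [hf, Polynomial.eval_mul, Polynomial.eval_C, hgeval, ht, map_mul,
        inv_mul_cancel_left₀ hιp]
    · have heS : e ∈ S := Finset.mem_erase.mpr ⟨hec', he⟩
      refine ⟨0, ?_⟩
      have h0 : (∏ d ∈ S, (e - d)) = 0 := Finset.prod_eq_zero heS (by simp)
      rw [hf, Polynomial.eval_mul, hgeval, h0]; simp
  obtain ⟨w, hw⟩ := huniv f hfdeg hvals z
  rw [hf, Polynomial.eval_mul, Polynomial.eval_C, hgeval] at hw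
  have hkey : ι (p * w) = ι (∏ d ∈ S, (z - d)) := by
    rw [map_mul, hw, mul_inv_cancel_left₀ hιp]
  have hdvd2 : p ∣ ∏ d ∈ S, (z - d) := ⟨w, (hι hkey).symm⟩
  obtain ⟨d, hdS, hpd⟩ := hp.exists_mem_finset_dvd hdvd2
  exact hz d hdS hpd
end
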